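/- arXiv:1906.04388 — 10 statements merged into one kernel-verified Lean document; each statement's English description precedes it below -/
import Mathlib

section
/- Consider a discrete-time queuing network on a finite set L of links with queues q : ℕ → L×L → ℝ, capacities c : L×L → ℝ, controls u : ℕ → L×L → {0,1}, routing rates r : ℕ → L×L → ℝ, exogenous flows e : ℕ → L×L → ℝ, throughputs s_{l,m}(t) = min(q_{l,m}(t), c_{l,m}), and conservation dynamics q_{l,m}(t+1) = q_{l,m}(t) + r_{l,m}(t)·Σ_k u_{k,l}(t)·s_{k,l}(t) − u_{l,m}(t)·s_{l,m}(t) + e_{l,m}(t). Let V(q) = (1/2)·Σ_{l,m} q_{l,m}² and δ(t+1) = q(t+1) − q(t). Then for every t: (i) V(q(t+1)) − V(q(t)) = Σ_{l,m} δ_{l,m}(t+1)·q_{l,m}(t) + (1/2)·Σ_{l,m} δ_{l,m}(t+1)², and (ii) Σ_{l,m} δ_{l,m}(t+1)·q_{l,m}(t) = Σ_{l,m} e_{l,m}(t)·q_{l,m}(t) − Σ_{l,m} ( q_{l,m}(t) − Σ_k q_{m,k}(t)·r_{m,k}(t) )·u_{l,m}(t)·s_{l,m}(t). -/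
/-- Backpressure as approximate gradient descent on the quadratic potential:
(i) one-step temporal difference identity for `V`, and
(ii) expansion of `δᵀq` via the conservation dynamics. -/
theorem stmt_0 {L : Type*} [Fintype L]
    (q : ℕ → L × L → ℝ)       -- queue sizes
    (cap : L × L → ℝ)          -- capacities
    (u : ℕ → L × L → ℝ)        -- controls
    (r : ℕ → L × L → ℝ)        -- routing rates
    (e : ℕ → L × L → ℝ)        -- exogenous flows
    (hu : ∀ t lm, u t lm = 0 ∨ u t lm = 1)
    (s : ℕ → L × L → ℝ)
    (hs : ∀ t lm, s t lm = min (q t lm) (cap lm))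
    (hdyn : ∀ t l m, q (t+1) (l, m)
        = q t (l, m) + r t (l, m) * (∑ k, u t (k, l) * s t (k, l))
          - u t (l, m) * s t (l, m) + e t (l, m))
    (V : (L × L → ℝ) → ℝ)
    (hV : ∀ x, V x = (1/2) * ∑ lm, (x lm)^2)
    (δ : ℕ → L × L → ℝ)
    (hδ : ∀ t lm, δ (t+1) lm = q (t+1) lm - q t lm) :
    ∀ t : ℕ,
      (V (q (t+1)) - V (q t)
        = (∑ lm, δ (t+1) lm * q t lm) + (1/2) * ∑ lm, (δ (t+1) lm)^2)
      ∧ ((∑ lm, δ (t+1) lm * q t lm)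
        = (∑ lm, e t lm * q t lm)
          - ∑ lm : L × L,
              (q t lm - ∑ k, q t (lm.2, k) * r t (lm.2, k)) * (u t lm * s t lm)) := by

  intro t
  have key : ∀ lm : L × L, δ (t+1) lm
      = r t lm * (∑ k, u t (k, lm.1) * s t (k, lm.1)) - u t lm * s t lm + e t lm := by
    rintro ⟨l, m⟩
    rw [hδ, hdyn]
    ring
  constructor
  · rw [hV, hV, Finset.mul_sum, Finset.mul_sum, Finset.mul_sum,
      ← Finset.sum_sub_distrib, ← Finset.sum_add_distrib]
    apply Finset.sum_congr rfl
    intro lm _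
    rw [hδ]
    ring
  · have expand : (∑ lm, δ (t+1) lm * q t lm)
        = ((∑ lm : L × L, q t lm * r t lm * (∑ k, u t (k, lm.1) * s t (k, lm.1)))
          + (∑ lm, e t lm * q t lm)) - ∑ lm, q t lm * (u t lm * s t lm) := by
      rw [← Finset.sum_add_distrib, ← Finset.sum_sub_distrib]
      apply Finset.sum_congr rfl
      intro lm _
      rw [key]
      ring
    have swap : (∑ lm : L × L, q t lm * r t lm * (∑ k, u t (k, lm.1) * s t (k, lm.1)))
        = ∑ lm : L × L, (∑ k, q t (lm.2, k) * r t (lm.2, k)) * (u t lm * s t lm) := by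
      rw [Fintype.sum_prod_type, Fintype.sum_prod_type]
      simp only [Finset.mul_sum, Finset.sum_mul]
      rw [show (∑ a : L, ∑ b : L, ∑ c : L,
          q t (a, b) * r t (a, b) * (u t (c, a) * s t (c, a)))
        = ∑ a : L, ∑ c : L, ∑ b : L,
          q t (a, b) * r t (a, b) * (u t (c, a) * s t (c, a)) from
        Finset.sum_congr rfl fun a _ => Finset.sum_comm]
      rw [Finset.sum_comm]
    have final : (∑ lm : L × L,
          (q t lm - ∑ k, q t (lm.2, k) * r t (lm.2, k)) * (u t lm * s t lm))
        = (∑ lm, q t lm * (u t lm * s t lm))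
          - ∑ lm : L × L, (∑ k, q t (lm.2, k) * r t (lm.2, k)) * (u t lm * s t lm) := by
      rw [← Finset.sum_sub_distrib]
      apply Finset.sum_congr rfl
      intro lm _
      ring
    rw [expand, final, swap]
    ring
end

section
/- In the 2×1 junction model with η ∈ (0, 1/2], consider the alternating schedule a(t) = 1 if t is even and a(t) = 2 if t is odd, with initial conditions qᵢ(0) = fᵢ. Then for all t ∈ ℕ and i ∈ {1,2}: fᵢ ≤ qᵢ(t) ≤ 2·fᵢ. In particular q₁(t) ≤ 2ηc and q₂(t) ≤ 2kηc for all t. -/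
/-- Alternating schedule on the 2×1 junction (queue 1 = index 0, queue 2 = index 1):
queue i stays between `f i` and `2 f i`; in particular `q₁ ≤ 2ηc` and `q₂ ≤ 2kηc`. -/
theorem stmt_2
    (c k η Q γ0 : ℝ) (γ : Fin 2 → ℝ)
    (hc : 0 < c) (hk : 1 < k) (hη : 0 < η) (hη' : η ≤ 1/2) (hQ : 0 ≤ Q)
    (hγ : ∀ i, 0 < γ i) (hγ0 : 0 < γ0)
    (cap f : Fin 2 → ℝ)
    (hcap0 : cap 0 = c) (hcap1 : cap 1 = k * c)
    (hf0 : f 0 = η * c) (hf1 : f 1 = k * η * c)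
    (q : ℕ → Fin 2 → ℝ) (a : ℕ → Fin 2)
    (ha : ∀ t, a t = if Even t then 0 else 1)   -- alternating schedule
    (hq0 : ∀ i, q 0 i = f i)
    (hdyn : ∀ t i, q (t+1) i
        = q t i + f i - (if i = a t then min (q t i) (cap i) else 0)) :
    (∀ t i, f i ≤ q t i ∧ q t i ≤ 2 * f i)
      ∧ (∀ t, q t 0 ≤ 2 * η * c ∧ q t 1 ≤ 2 * k * η * c) := by
  have hf0pos : 0 < f 0 := by rw [hf0]; positivity
  have hf1pos : 0 < f 1 := by rw [hf1]; positivity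
  have h2f0c : 2 * f 0 ≤ cap 0 := by
    rw [hf0, hcap0]; nlinarith
  have h2f1c : 2 * f 1 ≤ cap 1 := by
    rw [hf1, hcap1]; nlinarith
  have key : ∀ t, (Even t → (q t 0 = f 0 ∨ q t 0 = 2 * f 0) ∧ q t 1 = f 1) ∧
      (¬ Even t → q t 0 = f 0 ∧ q t 1 = 2 * f 1) := by
    intro t
    induction t with
    | zero =>
      refine ⟨fun _ => ⟨Or.inl (hq0 0), hq0 1⟩, fun h => absurd (Even.zero) h⟩
    | succ n ih =>
      by_cases hn : Even n
      · have hne : ¬ Even (n + 1) := by simp [Nat.even_add_one, hn]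
        have ha' : a n = 0 := by rw [ha n, if_pos hn]
        obtain ⟨h0, h1⟩ := ih.1 hn
        refine ⟨fun h => absurd h hne, fun _ => ?_⟩
        constructor
        · have hle : q n 0 ≤ cap 0 := by
            rcases h0 with h | h <;> rw [h] <;> linarith
          rw [hdyn n 0, ha', if_pos rfl, min_eq_left hle]; ring
        · rw [hdyn n 1, ha', if_neg (by decide), h1]; ring
      · have hne : Even (n + 1) := Nat.even_add_one.mpr hn
        have ha' : a n = 1 := by rw [ha n, if_neg hn]
        obtain ⟨h0, h1⟩ := ih.2 hn
        refine ⟨fun _ => ?_, fun h => absurd hne h⟩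
        constructor
        · right; rw [hdyn n 0, ha', if_neg (by decide), h0]; ring
        · have hle : q n 1 ≤ cap 1 := by rw [h1]; linarith
          rw [hdyn n 1, ha', if_pos rfl, min_eq_left hle, h1]; ring
  have bounds : ∀ t i, f i ≤ q t i ∧ q t i ≤ 2 * f i := by
    intro t i
    obtain ⟨he, ho⟩ := key t
    match i with
    | 0 =>
      by_cases h : Even t
      · rcases (he h).1 with h0 | h0 <;> rw [h0] <;> constructor <;> linarith
      · rw [(ho h).1]; constructor <;> linarith
    | 1 =>
      by_cases h : Even t
      · rw [(he h).2]; constructor <;> linarith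
      · rw [(ho h).2]; constructor <;> linarith
  refine ⟨bounds, fun t => ?_⟩
  have h0 := (bounds t 0).2
  have h1 := (bounds t 1).2
  rw [hf0] at h0; rw [hf1] at h1
  constructor <;> linarith
end

section
/- In the 2×1 junction model with classical backpressure weights and Q = 0, for every trajectory (arbitrary activation sequence) and every time t at which queue 1 has maximal priority, i.e. p₁(q₁(t)) ≥ p₂(q₂(t)), one has q₁(t) ≥ k²·η·c. Hence under the backpressure rule, queue 1 can only be activated when its size is at least k times larger than the bound k·η·c achieved by an alternating schedule, exhibiting an O(k) performance gap. -/
/-- O(k) performance gap for classical backpressure on the 2×1 junction with `Q = 0`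
(queue 1 = index 0, queue 2 = index 1): whenever queue 1 has maximal priority,
i.e. `p₁(q₁(t)) ≥ p₂(q₂(t))`, its size is at least `k²·η·c`. -/
theorem stmt_3
    (c k η Q γ0 : ℝ) (γ : Fin 2 → ℝ)
    (hc : 0 < c) (hk : 1 < k) (hη : 0 < η) (hη' : η ≤ 1/2) (hQ : Q = 0)
    (hγcl : ∀ i, γ i = 1) (hγ0cl : γ0 = 1)   -- classical backpressure weights
    (cap f : Fin 2 → ℝ)
    (hcap0 : cap 0 = c) (hcap1 : cap 1 = k * c)
    (hf0 : f 0 = η * c) (hf1 : f 1 = k * η * c)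
    (p : Fin 2 → ℝ → ℝ)
    (hp : ∀ i x, p i x = (γ i * x - γ0 * Q) * cap i)
    (q : ℕ → Fin 2 → ℝ) (a : ℕ → Fin 2)
    (hq0 : ∀ i, f i ≤ q 0 i)
    (hdyn : ∀ t i, q (t+1) i
        = q t i + f i - (if i = a t then min (q t i) (cap i) else 0)) :
    ∀ t, p 1 (q t 1) ≤ p 0 (q t 0) → k^2 * η * c ≤ q t 0 := by
  have hinv : ∀ t i, f i ≤ q t i := by
    intro t
    induction t with
    | zero => exact hq0
    | succ t ih =>
      intro i
      have hfpos : 0 < f i := by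
        fin_cases i <;> simp [hf0, hf1] <;> positivity
      rw [hdyn t i]
      by_cases h : i = a t
      · rw [if_pos h]
        have hm : min (q t i) (cap i) ≤ q t i := min_le_left _ _
        linarith [ih i]
      · rw [if_neg h]
        linarith [ih i]
  intro t hpt
  rw [hp, hp, hQ, hγ0cl, hγcl, hγcl, hcap0, hcap1] at hpt
  have h1 := hinv t 1
  rw [hf1] at h1
  have hkc : 0 < k * c := by positivity
  -- from hpt : (q t 1 - 0) * (k*c) ≤ (q t 0 - 0) * c
  have : k * q t 1 ≤ q t 0 := by nlinarith
  nlinarith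
end

section
/- For every backpressure trajectory of the 2×1 junction model with η ∈ (0, 1/2) in the R1 regime: if at a time t ≥ 1 the saturated queue is activated, i.e. a(t) = s, and the unsaturated queue is strictly above its minimum, i.e. q_u(t) > f_u, then p̃max(t + 2) < P(t). -/
/-- R1 regime (queue `is` saturated, queue `iu` unsaturated): if the saturated queue
is activated at time t ≥ 1 while the unsaturated queue is strictly above its minimum,
then p̃max(t+2) < P(t). -/
theorem stmt_10
    (c k η Q γ0 : ℝ) (γ : Fin 2 → ℝ)
    (hc : 0 < c) (hk : 1 < k) (hη : 0 < η) (hη' : η < 1/2) (hQ : 0 ≤ Q)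
    (hγ : ∀ i, 0 < γ i) (hγ0 : 0 < γ0)
    (cap f : Fin 2 → ℝ)
    (hcap0 : cap 0 = c) (hcap1 : cap 1 = k * c)
    (hf0 : f 0 = η * c) (hf1 : f 1 = k * η * c)
    (p : Fin 2 → ℝ → ℝ)
    (hp : ∀ i x, p i x = (γ i * x - γ0 * Q) * cap i)
    (q : ℕ → Fin 2 → ℝ) (a : ℕ → Fin 2)
    (hq0 : ∀ i, f i ≤ q 0 i)
    (hdyn : ∀ t i, q (t+1) i
        = q t i + f i - (if i = a t then min (q t i) (cap i) else 0))
    (hbp : ∀ t, p (a t) (q t (a t)) = max (p 0 (q t 0)) (p 1 (q t 1)))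
    (P : ℕ → ℝ) (hPdef : ∀ v, P v = max (p 0 (q v 0)) (p 1 (q v 1)))
    (ptil : ℕ → ℝ) (hptil : ∀ t, 1 ≤ t → ptil t = min (P (t - 1)) (P t))
    (iu is : Fin 2) (hus : iu ≠ is)
    (hsat : ∀ t, cap is ≤ q t is) (hunsat : ∀ t, q t iu ≤ cap iu) :
    ∀ t, 1 ≤ t → a t = is → f iu < q t iu → ptil (t + 2) < P t := by

  intro t ht hat hqu
  have two01 : ∀ j : Fin 2, j = 0 ∨ j = 1 := by
    intro j
    rcases j with ⟨_ | _ | n, hj⟩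
    · exact Or.inl rfl
    · exact Or.inr rfl
    · omega
  have hcapp : ∀ i : Fin 2, 0 < cap i := by
    intro i; rcases two01 i with hi | hi <;> subst hi
    · rw [hcap0]; exact hc
    · rw [hcap1]; exact mul_pos (by linarith) hc
  have hfcap : ∀ i : Fin 2, f i = η * cap i := by
    intro i; rcases two01 i with hi | hi <;> subst hi
    · rw [hf0, hcap0]
    · rw [hf1, hcap1]; ring
  have pmlt : ∀ (i : Fin 2) {x y : ℝ}, x < y → p i x < p i y := by
    intro i x y hxy
    rw [hp i x, hp i y]
    have h1 := hcapp i; have h2 := hγ i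
    nlinarith [mul_pos h2 h1]
  have pleP : ∀ v (j : Fin 2), p j (q v j) ≤ P v := by
    intro v j; rw [hPdef]
    rcases two01 j with hj | hj <;> subst hj
    · exact le_max_left _ _
    · exact le_max_right _ _
  have two : ∀ j : Fin 2, j = iu ∨ j = is := by
    intro j
    rcases two01 j with hj | hj <;> rcases two01 iu with hu | hu <;>
      rcases two01 is with hs | hs <;> subst hj <;> subst hu <;> subst hs <;>
      first | exact Or.inl rfl | exact Or.inr rfl | exact absurd rfl hus
  have hPt : P t = p is (q t is) := by rw [hPdef, ← hbp t, hat]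
  have q1s : q (t+1) is = q t is + f is - cap is := by
    have h := hdyn t is
    rw [hat, if_pos rfl, min_eq_right (hsat t)] at h
    exact h
  have q1u : q (t+1) iu = q t iu + f iu := by
    have h := hdyn t iu
    rw [hat, if_neg hus] at h
    linarith
  have hte : ptil (t + 2) = min (P (t+1)) (P (t+2)) := by
    have := hptil (t+2) (by omega)
    simpa using this
  rcases two (a (t+1)) with h | h
  · -- a (t+1) = iu
    have q2u : q (t+2) iu = f iu := by
      have h2 := hdyn (t+1) iu
      rw [h, if_pos rfl, min_eq_left (hunsat (t+1))] at h2
      linarith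
    have q2s : q (t+2) is = q t is + f is + f is - cap is := by
      have h2 := hdyn (t+1) is
      rw [h, if_neg (Ne.symm hus)] at h2
      rw [h2, q1s]; ring
    have hlts : q (t+2) is < q t is := by
      rw [q2s, hfcap is]; nlinarith [hcapp is]
    have each : ∀ j : Fin 2, p j (q (t+2) j) < P t := by
      intro j
      rcases two j with hj | hj
      · rw [hj, q2u]
        exact lt_of_lt_of_le (pmlt iu hqu) (pleP t iu)
      · rw [hj, hPt]
        exact pmlt is hlts
    have hP2 : P (t+2) < P t := by
      rw [hPdef (t+2)]
      exact max_lt (each 0) (each 1)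
    rw [hte]
    exact lt_of_le_of_lt (min_le_right _ _) hP2
  · -- a (t+1) = is
    have hP1 : P (t+1) = p is (q (t+1) is) := by rw [hPdef, ← hbp (t+1), h]
    have hlt : q (t+1) is < q t is := by
      rw [q1s, hfcap is]; nlinarith [hcapp is]
    have : P (t+1) < P t := by
      rw [hP1, hPt]; exact pmlt is hlt
    rw [hte]
    exact lt_of_le_of_lt (min_le_left _ _) this
end

section
/- For every backpressure trajectory of the 2×1 junction model with η ∈ (0, 1/2) in the R1 regime: if at time t the unsaturated queue is at its minimum, q_u(t) = f_u, the priorities are tied, p_u(q_u(t)) = p_s(q_s(t)), and the saturated queue is activated, a(t) = s, then the max-priority rule forces activation of the unsaturated queue at the next two steps: a(t+1) = u and a(t+2) = u. In particular, in this situation the saturated queue is activated at most once consecutively. -/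
lemma aux_max (g : Fin 2 → ℝ) (iu is j : Fin 2) (hus : iu ≠ is)
    (hlt : g is < g iu) (hj : g j = max (g 0) (g 1)) : j = iu := by
  have h2 : (iu = 0 ∧ is = 1) ∨ (iu = 1 ∧ is = 0) := by
    fin_cases iu <;> fin_cases is <;> simp_all
  rcases h2 with ⟨h1, h2'⟩ | ⟨h1, h2'⟩ <;> subst h1 <;> subst h2' <;> fin_cases j
  · rfl
  · exact absurd ((le_max_left (g 0) (g 1)).trans_eq hj.symm) (not_le.mpr hlt)
  · exact absurd ((le_max_right (g 0) (g 1)).trans_eq hj.symm) (not_le.mpr hlt)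
  · rfl

/-- R1 regime: if the unsaturated queue is at its minimum, priorities are tied, and
the saturated queue is activated at time t, then the unsaturated queue must be
activated at the next two steps (so the saturated queue is activated at most once
consecutively). -/
theorem stmt_11
    (c k η Q γ0 : ℝ) (γ : Fin 2 → ℝ)
    (hc : 0 < c) (hk : 1 < k) (hη : 0 < η) (hη' : η < 1/2) (hQ : 0 ≤ Q)
    (hγ : ∀ i, 0 < γ i) (hγ0 : 0 < γ0)
    (cap f : Fin 2 → ℝ)
    (hcap0 : cap 0 = c) (hcap1 : cap 1 = k * c)
    (hf0 : f 0 = η * c) (hf1 : f 1 = k * η * c)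
    (p : Fin 2 → ℝ → ℝ)
    (hp : ∀ i x, p i x = (γ i * x - γ0 * Q) * cap i)
    (q : ℕ → Fin 2 → ℝ) (a : ℕ → Fin 2)
    (hq0 : ∀ i, f i ≤ q 0 i)
    (hdyn : ∀ t i, q (t+1) i
        = q t i + f i - (if i = a t then min (q t i) (cap i) else 0))
    (hbp : ∀ t, p (a t) (q t (a t)) = max (p 0 (q t 0)) (p 1 (q t 1)))
    (iu is : Fin 2) (hus : iu ≠ is)
    (hsat : ∀ t, cap is ≤ q t is) (hunsat : ∀ t, q t iu ≤ cap iu) :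
    ∀ t, q t iu = f iu → p iu (q t iu) = p is (q t is) → a t = is →
      a (t + 1) = iu ∧ a (t + 2) = iu := by
  have h0 : 0 < f 0 ∧ 0 < cap 0 ∧ 2 * f 0 < cap 0 := by
    rw [hf0, hcap0]; exact ⟨by positivity, hc, by nlinarith⟩
  have h1 : 0 < f 1 ∧ 0 < cap 1 ∧ 2 * f 1 < cap 1 := by
    rw [hf1, hcap1]; exact ⟨by positivity, by positivity, by nlinarith⟩
  have hkey : ∀ i : Fin 2, 0 < f i ∧ 0 < cap i ∧ 2 * f i < cap i := by
    intro i; fin_cases i; exacts [h0, h1]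
  obtain ⟨hfu, hcapu, h2fu⟩ := hkey iu
  obtain ⟨hfs, hcaps, h2fs⟩ := hkey is
  intro t hqu htie hats
  -- queue values at t+1
  have hq1u : q (t+1) iu = f iu + f iu := by
    rw [hdyn t iu, hqu, hats, if_neg hus]; ring
  have hq1s : q (t+1) is = q t is + f is - cap is := by
    rw [hdyn t is, hats, if_pos rfl, min_eq_right (hsat t)]
  -- strict priority comparison at t+1
  rw [hp, hp] at htie
  rw [hqu] at htie
  have hlt1 : p is (q (t+1) is) < p iu (q (t+1) iu) := by
    rw [hp, hp, hq1u, hq1s]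
    have hA : γ is * (f is - cap is) * cap is < 0 := by nlinarith [mul_pos (hγ is) hcaps]
    have hB : 0 < γ iu * f iu * cap iu := mul_pos (mul_pos (hγ iu) hfu) hcapu
    nlinarith [htie]
  have ha1 : a (t+1) = iu :=
    aux_max (fun i => p i (q (t+1) i)) iu is (a (t+1)) hus hlt1 (hbp (t+1))
  refine ⟨ha1, ?_⟩
  -- queue values at t+2
  have hq2u : q (t+2) iu = f iu := by
    rw [show t+2 = (t+1)+1 by ring, hdyn (t+1) iu, ha1, if_pos rfl,
      min_eq_left (hunsat (t+1)), hq1u]; ring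
  have hq2s : q (t+2) is = q t is + f is - cap is + f is := by
    rw [show t+2 = (t+1)+1 by ring, hdyn (t+1) is, ha1,
      if_neg (fun h => hus h.symm), hq1s]; ring
  have hlt2 : p is (q (t+2) is) < p iu (q (t+2) iu) := by
    rw [hp, hp, hq2u, hq2s]
    have hA : γ is * (2 * f is - cap is) * cap is < 0 := by nlinarith [mul_pos (hγ is) hcaps]
    nlinarith [htie]
  exact aux_max (fun i => p i (q (t+2) i)) iu is (a (t+2)) hus hlt2 (hbp (t+2))
end

section
/- For every backpressure trajectory of the 2×1 junction model, the priority of any queue at any time t ≥ 1 exceeds the rolling min-max priority by at most one inflow increment: for all t ≥ 1 and i ∈ {1,2}, pᵢ(qᵢ(t)) ≤ p̃max(t) + γᵢ·fᵢ·cᵢ. -/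
/-- Every queue's priority exceeds the rolling min-max priority by at most one
inflow increment: pᵢ(qᵢ(t)) ≤ p̃max(t) + γᵢ·fᵢ·cᵢ for all t ≥ 1. -/
theorem stmt_12
    (c k η Q γ0 : ℝ) (γ : Fin 2 → ℝ)
    (hc : 0 < c) (hk : 1 < k) (hη : 0 < η) (hη' : η ≤ 1/2) (hQ : 0 ≤ Q)
    (hγ : ∀ i, 0 < γ i) (hγ0 : 0 < γ0)
    (cap f : Fin 2 → ℝ)
    (hcap0 : cap 0 = c) (hcap1 : cap 1 = k * c)
    (hf0 : f 0 = η * c) (hf1 : f 1 = k * η * c)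
    (p : Fin 2 → ℝ → ℝ)
    (hp : ∀ i x, p i x = (γ i * x - γ0 * Q) * cap i)
    (q : ℕ → Fin 2 → ℝ) (a : ℕ → Fin 2)
    (hq0 : ∀ i, f i ≤ q 0 i)
    (hdyn : ∀ t i, q (t+1) i
        = q t i + f i - (if i = a t then min (q t i) (cap i) else 0))
    (hbp : ∀ t, p (a t) (q t (a t)) = max (p 0 (q t 0)) (p 1 (q t 1)))
    (P : ℕ → ℝ) (hPdef : ∀ v, P v = max (p 0 (q v 0)) (p 1 (q v 1)))
    (ptil : ℕ → ℝ) (hptil : ∀ t, 1 ≤ t → ptil t = min (P (t - 1)) (P t)) :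
    ∀ t, 1 ≤ t → ∀ i, p i (q t i) ≤ ptil t + γ i * f i * cap i := by

  have hcapPos : ∀ i, 0 < cap i := by
    intro i
    fin_cases i
    · show (0:ℝ) < cap 0; rw [hcap0]; exact hc
    · show (0:ℝ) < cap 1; rw [hcap1]; positivity
  have hfPos : ∀ i, 0 < f i := by
    intro i
    fin_cases i
    · show (0:ℝ) < f 0; rw [hf0]; positivity
    · show (0:ℝ) < f 1; rw [hf1]; positivity
  have hqlb : ∀ t i, f i ≤ q t i := by
    intro t
    induction t with
    | zero => exact hq0
    | succ s ih =>
      intro i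
      rw [hdyn]
      by_cases h : i = a s
      · rw [if_pos h]
        have h1 : min (q s i) (cap i) ≤ q s i := min_le_left _ _
        linarith [ih i]
      · rw [if_neg h]
        linarith [ih i, (hfPos i).le]
  intro t ht i
  obtain ⟨s, rfl⟩ : ∃ s, t = s + 1 := ⟨t - 1, (Nat.succ_pred_eq_of_pos ht).symm⟩
  have hle_q : q (s+1) i ≤ q s i + f i := by
    rw [hdyn]
    by_cases h : i = a s
    · simp only [if_pos h]
      have h0 : 0 ≤ min (q s i) (cap i) :=
        le_min (le_trans (hfPos i).le (hqlb s i)) (hcapPos i).le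
      linarith
    · simp only [if_neg h]; linarith
  have hle_Pt : p i (q (s+1) i) ≤ P (s+1) := by
    rw [hPdef]
    fin_cases i
    · exact le_max_left _ _
    · exact le_max_right _ _
  have hle_Ps : p i (q (s+1) i) ≤ P s + γ i * f i * cap i := by
    have h1 : p i (q (s+1) i) ≤ p i (q s i) + γ i * f i * cap i := by
      rw [hp, hp]
      have hγi := (hγ i).le
      have hci := (hcapPos i).le
      nlinarith [mul_le_mul_of_nonneg_left hle_q hγi]
    have h2 : p i (q s i) ≤ P s := by
      rw [hPdef]
      fin_cases i
      · exact le_max_left _ _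
      · exact le_max_right _ _
    linarith
  rw [hptil (s+1) ht]
  simp only [Nat.add_sub_cancel]
  have : min (P s) (P (s+1)) + γ i * f i * cap i =
      min (P s + γ i * f i * cap i) (P (s+1) + γ i * f i * cap i) := by
    rw [min_add_add_right]
  rw [this]
  refine le_min hle_Ps ?_
  have h0 : 0 ≤ γ i * f i * cap i :=
    (mul_pos (mul_pos (hγ i) (hfPos i)) (hcapPos i)).le
  linarith [hle_Pt]
end

section
/- For every backpressure trajectory of the 2×1 junction model with η ∈ (0, 1/2), the queue sizes are bounded: there exists M ∈ ℝ such that for all t ∈ ℕ and i ∈ {1,2}, qᵢ(t) ≤ M. -/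
/-- Boundedness of queues along every backpressure trajectory with η ∈ (0,1/2). -/
theorem stmt_13
    (c k η Q γ0 : ℝ) (γ : Fin 2 → ℝ)
    (hc : 0 < c) (hk : 1 < k) (hη : 0 < η) (hη' : η < 1/2) (hQ : 0 ≤ Q)
    (hγ : ∀ i, 0 < γ i) (hγ0 : 0 < γ0)
    (cap f : Fin 2 → ℝ)
    (hcap0 : cap 0 = c) (hcap1 : cap 1 = k * c)
    (hf0 : f 0 = η * c) (hf1 : f 1 = k * η * c)
    (p : Fin 2 → ℝ → ℝ)
    (hp : ∀ i x, p i x = (γ i * x - γ0 * Q) * cap i)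
    (q : ℕ → Fin 2 → ℝ) (a : ℕ → Fin 2)
    (hq0 : ∀ i, f i ≤ q 0 i)
    (hdyn : ∀ t i, q (t+1) i
        = q t i + f i - (if i = a t then min (q t i) (cap i) else 0))
    (hbp : ∀ t, p (a t) (q t (a t)) = max (p 0 (q t 0)) (p 1 (q t 1))) :
    ∃ M : ℝ, ∀ t i, q t i ≤ M := by
  have hk0 : (0:ℝ) < k := lt_trans one_pos hk
  have hcapPos : ∀ i : Fin 2, 0 < cap i := by
    intro i
    rcases (show i = 0 ∨ i = 1 by omega) with rfl | rfl
    · rw [hcap0]; exact hc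
    · rw [hcap1]; positivity
  have hfe : ∀ i : Fin 2, f i = η * cap i := by
    intro i
    rcases (show i = 0 ∨ i = 1 by omega) with rfl | rfl
    · rw [hf0, hcap0]
    · rw [hf1, hcap1]; ring
  have hfPos : ∀ i, 0 < f i := fun i => by rw [hfe]; exact mul_pos hη (hcapPos i)
  have hqf : ∀ t i, f i ≤ q t i := by
    intro t
    induction t with
    | zero => exact hq0
    | succ n ih =>
      intro i
      rw [hdyn n i]
      by_cases h : i = a n
      · rw [if_pos h]
        have h1 : min (q n i) (cap i) ≤ q n i := min_le_left _ _
        have h2 := ih i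
        linarith
      · rw [if_neg h]
        have := ih i
        have := (hfPos i).le
        linarith
  have hqPos : ∀ t i, 0 ≤ q t i := fun t i => le_trans (hfPos i).le (hqf t i)
  -- constants
  set A0 : ℝ := γ 0 * cap 0 ^ 2 with hA0def
  set A1 : ℝ := γ 1 * cap 1 ^ 2 with hA1def
  have hc0 := hcapPos 0
  have hc1 := hcapPos 1
  have hg0 := hγ 0
  have hg1 := hγ 1
  have hA0pos : 0 < A0 := by positivity
  have hA1pos : 0 < A1 := by positivity
  set Num : ℝ := A0 + A1 + γ0 * Q * (cap 0 + cap 1) with hNumDef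
  have hNumPos : 0 < Num := by positivity
  set Den : ℝ := min A0 A1 with hDenDef
  have hDenPos : 0 < Den := lt_min hA0pos hA1pos
  set K : ℝ := Num / Den with hKdef
  -- key bound on the other queue when the served queue is below capacity
  have hKbound : ∀ t (i j : Fin 2), q t i ≤ cap i →
      p j (q t j) ≤ p i (q t i) → q t j / cap j ≤ K := by
    intro t i j hqi hle
    rw [hp, hp] at hle
    have hnum : γ j * cap j * q t j ≤ Num := by
      rcases (show i = 0 ∨ i = 1 by omega) with rfl | rfl <;>
        rcases (show j = 0 ∨ j = 1 by omega) with rfl | rfl <;>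
        linarith [mul_le_mul_of_nonneg_right
            (mul_le_mul_of_nonneg_left hqi hg0.le) hc0.le,
          mul_le_mul_of_nonneg_right
            (mul_le_mul_of_nonneg_left hqi hg1.le) hc1.le,
          mul_nonneg (mul_nonneg hγ0.le hQ) hc0.le,
          mul_nonneg (mul_nonneg hγ0.le hQ) hc1.le, hA0pos, hA1pos]
    have hDenJ : Den ≤ γ j * cap j ^ 2 := by
      rcases (show j = 0 ∨ j = 1 by omega) with rfl | rfl
      · exact min_le_left _ _
      · exact min_le_right _ _
    rw [hKdef, div_le_div_iff₀ (hcapPos j) hDenPos]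
    linarith [mul_le_mul_of_nonneg_right hnum (hcapPos j).le,
      mul_le_mul_of_nonneg_left hDenJ (hqPos t j)]
  -- one-step bound on the Lyapunov function W t = q t 0 / cap 0 + q t 1 / cap 1
  have hstep : ∀ t, q (t+1) 0 / cap 0 + q (t+1) 1 / cap 1
      ≤ max (q t 0 / cap 0 + q t 1 / cap 1) (K + 2 * η) := by
    intro t
    have hple : ∀ jj, p jj (q t jj) ≤ p (a t) (q t (a t)) := by
      intro jj; rw [hbp t]
      rcases (show jj = 0 ∨ jj = 1 by omega) with rfl | rfl
      · exact le_max_left _ _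
      · exact le_max_right _ _
    have hat : a t = 0 ∨ a t = 1 := by omega
    rcases hat with h | h
    · have e0 : q (t+1) 0 = q t 0 + f 0 - min (q t 0) (cap 0) := by
        rw [hdyn t 0, if_pos h.symm]
      have e1 : q (t+1) 1 = q t 1 + f 1 := by
        rw [hdyn t 1, if_neg (by rw [h]; decide)]; ring
      rcases le_or_gt (cap 0) (q t 0) with hge | hlt
      · have hmin : min (q t 0) (cap 0) = cap 0 := min_eq_right hge
        rw [e0, e1, hmin, hfe 0, hfe 1]
        have heq : (q t 0 + η * cap 0 - cap 0) / cap 0 + (q t 1 + η * cap 1) / cap 1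
            = q t 0 / cap 0 + q t 1 / cap 1 + (2 * η - 1) := by
          field_simp; ring
        rw [heq]
        have : 2 * η - 1 < 0 := by linarith
        exact le_trans (by linarith [le_refl (q t 0 / cap 0 + q t 1 / cap 1)])
          (le_max_left _ _)
      · have hmin : min (q t 0) (cap 0) = q t 0 := min_eq_left hlt.le
        have hK1 : q t 1 / cap 1 ≤ K := by
          apply hKbound t 0 1 hlt.le
          have := hple 1; rwa [h] at this
        rw [e0, e1, hmin, hfe 0, hfe 1]
        have heq : (q t 0 + η * cap 0 - q t 0) / cap 0 + (q t 1 + η * cap 1) / cap 1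
            = q t 1 / cap 1 + 2 * η := by
          field_simp; ring
        rw [heq]
        exact le_trans (by linarith) (le_max_right _ _)
    · have e1 : q (t+1) 1 = q t 1 + f 1 - min (q t 1) (cap 1) := by
        rw [hdyn t 1, if_pos h.symm]
      have e0 : q (t+1) 0 = q t 0 + f 0 := by
        rw [hdyn t 0, if_neg (by rw [h]; decide)]; ring
      rcases le_or_gt (cap 1) (q t 1) with hge | hlt
      · have hmin : min (q t 1) (cap 1) = cap 1 := min_eq_right hge
        rw [e0, e1, hmin, hfe 0, hfe 1]
        have heq : (q t 0 + η * cap 0) / cap 0 + (q t 1 + η * cap 1 - cap 1) / cap 1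
            = q t 0 / cap 0 + q t 1 / cap 1 + (2 * η - 1) := by
          field_simp; ring
        rw [heq]
        exact le_trans (by linarith) (le_max_left _ _)
      · have hmin : min (q t 1) (cap 1) = q t 1 := min_eq_left hlt.le
        have hK1 : q t 0 / cap 0 ≤ K := by
          apply hKbound t 1 0 hlt.le
          have := hple 0; rwa [h] at this
        rw [e0, e1, hmin, hfe 0, hfe 1]
        have heq : (q t 0 + η * cap 0) / cap 0 + (q t 1 + η * cap 1 - q t 1) / cap 1
            = q t 0 / cap 0 + 2 * η := by
          field_simp; ring
        rw [heq]
        exact le_trans (by linarith) (le_max_right _ _)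
    -- global bound
  set MW : ℝ := max (q 0 0 / cap 0 + q 0 1 / cap 1) (K + 2 * η) with hMWdef
  have hbound : ∀ t, q t 0 / cap 0 + q t 1 / cap 1 ≤ MW := by
    intro t
    induction t with
    | zero => exact le_max_left _ _
    | succ n ih => exact le_trans (hstep n) (max_le ih (le_max_right _ _))
  have hMWnn : 0 ≤ MW := by
    refine le_trans ?_ (le_max_left _ _)
    have := hqPos 0 0; have := hqPos 0 1
    positivity
  refine ⟨(cap 0 + cap 1) * MW, fun t i => ?_⟩
  have h0 : 0 ≤ q t 0 / cap 0 := div_nonneg (hqPos t 0) hc0.le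
  have h1 : 0 ≤ q t 1 / cap 1 := div_nonneg (hqPos t 1) hc1.le
  have hb := hbound t
  rcases (show i = 0 ∨ i = 1 by omega) with rfl | rfl
  · have : q t 0 / cap 0 ≤ MW := by linarith
    rw [div_le_iff₀ hc0] at this
    linarith [mul_nonneg hc1.le hMWnn]
  · have : q t 1 / cap 1 ≤ MW := by linarith
    rw [div_le_iff₀ hc1] at this
    linarith [mul_nonneg hc0.le hMWnn]
end

section
/- For every backpressure trajectory of the 2×1 junction model with η ∈ (0, 1/2), each queue is activated infinitely often: for every i ∈ {1,2} and every T ∈ ℕ there exists t ≥ T with a(t) = i. -/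
/-- Each queue is activated infinitely often along every backpressure trajectory
with η ∈ (0,1/2). -/
theorem stmt_14
    (c k η Q γ0 : ℝ) (γ : Fin 2 → ℝ)
    (hc : 0 < c) (hk : 1 < k) (hη : 0 < η) (hη' : η < 1/2) (hQ : 0 ≤ Q)
    (hγ : ∀ i, 0 < γ i) (hγ0 : 0 < γ0)
    (cap f : Fin 2 → ℝ)
    (hcap0 : cap 0 = c) (hcap1 : cap 1 = k * c)
    (hf0 : f 0 = η * c) (hf1 : f 1 = k * η * c)
    (p : Fin 2 → ℝ → ℝ)
    (hp : ∀ i x, p i x = (γ i * x - γ0 * Q) * cap i)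
    (q : ℕ → Fin 2 → ℝ) (a : ℕ → Fin 2)
    (hq0 : ∀ i, f i ≤ q 0 i)
    (hdyn : ∀ t i, q (t+1) i
        = q t i + f i - (if i = a t then min (q t i) (cap i) else 0))
    (hbp : ∀ t, p (a t) (q t (a t)) = max (p 0 (q t 0)) (p 1 (q t 1))) :
    ∀ i : Fin 2, ∀ T : ℕ, ∃ t, T ≤ t ∧ a t = i := by
  have hfpos : ∀ x : Fin 2, 0 < f x := by
    intro x
    fin_cases x
    · show 0 < f 0; rw [hf0]; positivity
    · show 0 < f 1; rw [hf1]
      have hk0 : (0:ℝ) < k := by linarith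
      positivity
  have hcappos : ∀ x : Fin 2, 0 < cap x := by
    intro x
    fin_cases x
    · show 0 < cap 0; rw [hcap0]; exact hc
    · show 0 < cap 1; rw [hcap1]; nlinarith
  have hfle : ∀ x : Fin 2, f x ≤ cap x := by
    intro x
    fin_cases x
    · show f 0 ≤ cap 0; rw [hf0, hcap0]; nlinarith
    · show f 1 ≤ cap 1; rw [hf1, hcap1]
      nlinarith [mul_nonneg (mul_nonneg (by linarith : (0:ℝ) ≤ k) hc.le) (by linarith : (0:ℝ) ≤ 1 - η)]
  intro i T
  by_contra hcon
  push_neg at hcon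
  -- hcon : ∀ t, T ≤ t → a t ≠ i
  have hji : ∀ x y : Fin 2, x ≠ y → x = 1 - y := by decide
  set j : Fin 2 := 1 - i with hjdef
  -- queue i grows linearly
  have grow : ∀ n : ℕ, q (T + n) i = q T i + n * f i := by
    intro n
    induction n with
    | zero => simp
    | succ n ih =>
      have hd := hdyn (T + n) i
      have hne : i ≠ a (T + n) := (hcon (T + n) (Nat.le_add_right _ _)).symm
      rw [if_neg hne] at hd
      have : T + (n + 1) = (T + n) + 1 := by omega
      rw [this, hd, ih]
      push_cast
      ring
  -- queue j stays bounded
  have hb : ∀ n : ℕ, q (T + n) j ≤ max (q T j) (cap j) := by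
    intro n
    induction n with
    | zero => simp
    | succ n ih =>
      have hd := hdyn (T + n) j
      have haj : a (T + n) = j := hji _ _ (hcon (T + n) (Nat.le_add_right _ _))
      rw [haj, if_pos rfl] at hd
      have heq : T + (n + 1) = (T + n) + 1 := by omega
      rw [heq, hd]
      rcases le_total (q (T + n) j) (cap j) with hle | hle
      · rw [min_eq_left hle]
        calc q (T+n) j + f j - q (T+n) j = f j := by ring
          _ ≤ cap j := hfle j
          _ ≤ max (q T j) (cap j) := le_max_right _ _
      · rw [min_eq_right hle]
        have := hfle j
        linarith
  set M := max (q T j) (cap j) with hM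
  have hden : 0 < γ i * f i * cap i :=
    mul_pos (mul_pos (hγ i) (hfpos i)) (hcappos i)
  obtain ⟨n, hn⟩ := exists_nat_gt
    (((γ j * M - γ0 * Q) * cap j - (γ i * q T i - γ0 * Q) * cap i) / (γ i * f i * cap i))
  rw [div_lt_iff₀ hden] at hn
  have haj : a (T + n) = j := hji _ _ (hcon (T + n) (Nat.le_add_right _ _))
  have hmax := hbp (T + n)
  rw [haj] at hmax
  have h1 : p j (q (T + n) j) ≤ (γ j * M - γ0 * Q) * cap j := by
    rw [hp]
    have hbn := hb n
    have key : 0 ≤ γ j * (M - q (T+n) j) * cap j :=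
      mul_nonneg (mul_nonneg (hγ j).le (by linarith)) (hcappos j).le
    nlinarith [key]
  have h2 : p i (q (T + n) i) = (γ i * (q T i + n * f i) - γ0 * Q) * cap i := by
    rw [hp, grow n]
  have h3 : p i (q (T + n) i) ≤ max (p 0 (q (T + n) 0)) (p 1 (q (T + n) 1)) := by
    fin_cases i
    · exact le_max_left _ _
    · exact le_max_right _ _
  have hlt : (γ j * M - γ0 * Q) * cap j < (γ i * (q T i + n * f i) - γ0 * Q) * cap i := by
    nlinarith
  rw [← hmax] at h3
  rw [h2] at h3
  linarith
end

section
/- For every backpressure trajectory of the 2×1 junction model with η ∈ (0, 1/2) in the R1 regime, suppose the steady state is reached at time t₀ ≥ 1, i.e. p̃max(t) = p_act for all t ≥ t₀, where p_act = p_u(f_u). Then the unsaturated queue satisfies, for all t ≥ t₀: f_u ≤ q_u(t) ≤ 2·f_u. -/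
/-- Steady-state bounds for the unsaturated queue: if p̃max(t) = p_act = p_u(f_u)
for all t ≥ t₀, then f_u ≤ q_u(t) ≤ 2·f_u for all t ≥ t₀. -/
theorem stmt_16
    (c k η Q γ0 : ℝ) (γ : Fin 2 → ℝ)
    (hc : 0 < c) (hk : 1 < k) (hη : 0 < η) (hη' : η < 1/2) (hQ : 0 ≤ Q)
    (hγ : ∀ i, 0 < γ i) (hγ0 : 0 < γ0)
    (cap f : Fin 2 → ℝ)
    (hcap0 : cap 0 = c) (hcap1 : cap 1 = k * c)
    (hf0 : f 0 = η * c) (hf1 : f 1 = k * η * c)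
    (p : Fin 2 → ℝ → ℝ)
    (hp : ∀ i x, p i x = (γ i * x - γ0 * Q) * cap i)
    (q : ℕ → Fin 2 → ℝ) (a : ℕ → Fin 2)
    (hq0 : ∀ i, f i ≤ q 0 i)
    (hdyn : ∀ t i, q (t+1) i
        = q t i + f i - (if i = a t then min (q t i) (cap i) else 0))
    (hbp : ∀ t, p (a t) (q t (a t)) = max (p 0 (q t 0)) (p 1 (q t 1)))
    (P : ℕ → ℝ) (hPdef : ∀ v, P v = max (p 0 (q v 0)) (p 1 (q v 1)))
    (ptil : ℕ → ℝ) (hptil : ∀ t, 1 ≤ t → ptil t = min (P (t - 1)) (P t))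
    (iu is : Fin 2) (hus : iu ≠ is)
    (hsat : ∀ t, cap is ≤ q t is) (hunsat : ∀ t, q t iu ≤ cap iu) :
    ∀ t₀ : ℕ, 1 ≤ t₀ → (∀ t, t₀ ≤ t → ptil t = p iu (f iu)) →
      ∀ t, t₀ ≤ t → f iu ≤ q t iu ∧ q t iu ≤ 2 * f iu := by
  have hiu : iu = 0 ∨ iu = 1 := by omega
  have hcapu : 0 < cap iu := by
    rcases hiu with rfl | rfl
    · rw [hcap0]; exact hc
    · rw [hcap1]; positivity
  have hfu : 0 < f iu := by
    rcases hiu with rfl | rfl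
    · rw [hf0]; positivity
    · rw [hf1]; positivity
  have hγu : 0 < γ iu := hγ iu
  -- lower bound for all t
  have hlow : ∀ t, f iu ≤ q t iu := by
    intro t
    induction t with
    | zero => exact hq0 iu
    | succ n ih =>
      rw [hdyn n iu]
      by_cases h : iu = a n
      · rw [if_pos h, min_eq_left (hunsat n)]; linarith
      · rw [if_neg h]; linarith
  -- monotonicity of p iu
  have hmono : ∀ x : ℝ, f iu < x → p iu (f iu) < p iu x := by
    intro x hx
    rw [hp, hp]
    nlinarith [mul_pos hγu hcapu]
  -- P v dominates p iu (q v iu)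
  have hPle : ∀ v, p iu (q v iu) ≤ P v := by
    intro v
    rw [hPdef]
    rcases hiu with rfl | rfl
    · exact le_max_left _ _
    · exact le_max_right _ _
  intro t₀ ht₀ hss t ht
  refine ⟨hlow t, ?_⟩
  by_contra hcon
  push_neg at hcon
  obtain ⟨s, rfl⟩ : ∃ s, t = s + 1 := ⟨t - 1, by omega⟩
  by_cases h : iu = a s
  · have : q (s+1) iu = f iu := by
      rw [hdyn s iu, if_pos h, min_eq_left (hunsat s)]; ring
    rw [this] at hcon; linarith
  · have hq1 : q (s+1) iu = q s iu + f iu := by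
      rw [hdyn s iu, if_neg h]; ring
    have hqs : f iu < q s iu := by rw [hq1] at hcon; linarith
    have h1 : p iu (f iu) < P s := lt_of_lt_of_le (hmono _ hqs) (hPle s)
    have h2 : p iu (f iu) < P (s+1) := by
      refine lt_of_lt_of_le (hmono _ ?_) (hPle (s+1))
      linarith
    have h3 := hptil (s+1) (by omega)
    simp only [Nat.add_sub_cancel] at h3
    have h4 := hss (s+1) ht
    rw [h3] at h4
    rcases min_cases (P s) (P (s+1)) with ⟨heq, _⟩ | ⟨heq, _⟩ <;>
      rw [heq] at h4 <;> linarith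
end

section
/- Fix c > 0, η ∈ (0, 1/2), and Q ≥ 0. For the 2×1 junction in regime R1 with labeling (u,s) = (2,1), the average steady-state saturated queue sizes as functions of the heterogeneity k are A(k) = k²·η·c − (k − 1)·Q + η·c − c/2 under classical backpressure weights and B(k) = k·η·c − (k − 1)·Q/(k + 1) + η·c − c/2 under the proposed weights. Then the ratio of total times spent in the network satisfies A(k)/B(k) ∼ k as k → ∞, i.e. lim_{k → ∞} A(k)/(k·B(k)) = 1. -/
open Filter

/-- Labeling (u,s) = (2,1): the ratio of average steady-state saturated queue sizes
(total times spent) between classical backpressure, A(k), and the proposed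
algorithm, B(k), satisfies A(k)/B(k) ~ k as k → ∞, i.e. A(k)/(k·B(k)) → 1. -/
theorem stmt_18
    (c η Q : ℝ)
    (hc : 0 < c) (hη : 0 < η) (hη' : η < 1/2) (hQ : 0 ≤ Q)
    (A B : ℝ → ℝ)
    (hA : ∀ k, A k = k^2 * η * c - (k - 1) * Q + η * c - c / 2)
    (hB : ∀ k, B k = k * η * c - (k - 1) * Q / (k + 1) + η * c - c / 2) :
    Tendsto (fun k : ℝ => A k / (k * B k)) atTop (nhds 1) := by
  have ha : (0:ℝ) < η * c := mul_pos hη hc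
  set a := η * c with hadef
  set e := η * c - c/2 with hedef
  have ha' : a ≠ 0 := ne_of_gt ha
  set P : Polynomial ℝ :=
    Polynomial.C a * Polynomial.X ^ 3 + Polynomial.C (a - Q) * Polynomial.X ^ 2 +
      Polynomial.C e * Polynomial.X + Polynomial.C (Q + e) with hP
  set P' : Polynomial ℝ :=
    Polynomial.C a * Polynomial.X ^ 3 + Polynomial.C (a + e - Q) * Polynomial.X ^ 2 +
      Polynomial.C (Q + e) * Polynomial.X with hP'
  have hdegP : P.degree = 3 := by
    rw [hP]; compute_degree!
  have hdegP' : P'.degree = 3 := by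
    rw [hP']; compute_degree!
  have hdeg : P.degree = P'.degree := by rw [hdegP, hdegP']
  have hndP : P.natDegree = 3 := Polynomial.natDegree_eq_of_degree_eq_some hdegP
  have hndP' : P'.natDegree = 3 := Polynomial.natDegree_eq_of_degree_eq_some hdegP'
  have hlcP : P.leadingCoeff = a := by
    rw [Polynomial.leadingCoeff, hndP, hP]
    simp [Polynomial.coeff_X_pow, Polynomial.coeff_mul_X_pow', Polynomial.coeff_sub, Polynomial.coeff_add, Polynomial.coeff_C]
  have hlcP' : P'.leadingCoeff = a := by
    rw [Polynomial.leadingCoeff, hndP', hP']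
    simp [Polynomial.coeff_X_pow, Polynomial.coeff_mul_X_pow', Polynomial.coeff_sub, Polynomial.coeff_add, Polynomial.coeff_C]
  have hmain := Polynomial.div_tendsto_leadingCoeff_div_of_degree_eq P P' hdeg
  rw [hlcP, hlcP', div_self ha'] at hmain
  refine hmain.congr' ?_
  filter_upwards [eventually_ge_atTop (1:ℝ)] with k hk
  have hk0 : k ≠ 0 := by linarith
  have hk1 : k + 1 ≠ 0 := by linarith
  have hPA : P.eval k = (k + 1) * A k := by
    rw [hA, hP]; simp [hadef, hedef]; ring
  have hPB : P'.eval k = (k + 1) * (k * B k) := by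
    rw [hB, hP']; simp [hadef, hedef]
    field_simp
    ring
  rw [hPA, hPB, mul_div_mul_left _ _ hk1]
end
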